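/- Let d ≥ 2 be an integer, let α and K be nonzero real numbers with 2 + αK ≠ 0, and let T be real. Suppose f : (λ₀, T) → ℝ satisfies f(λ) > 0, 2·f(λ) + αK ≠ 0, and the implicit relation f(λ) = 1 − 2K(d−1)λ + (αK/2)·log|(2·f(λ) + αK)/(2 + αK)| for all λ ∈ (λ₀, T), and that f(λ) → 0 as λ → T from the left. Then T = 1/(2K(d−1)) + (α/(4(d−1)))·log|αK/(2 + αK)|. -/

import Mathlib

/-!
Let `λ → T⁻` in the implicit relation: `f → 0`, and the logarithmic term is continuous at
`f = 0` because `αK / (2 + αK) ≠ 0`, so `0 = 1 - 2K(d-1)T + (αK/2) log |αK / (2 + αK)|`,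
which is linear in `T`.
-/

open Filter Topology

theorem eq_of_tendsto_of_eventually_eq_apply {l : Filter ℝ} [l.NeBot] {T a : ℝ} {f : ℝ → ℝ}
    {F : ℝ → ℝ → ℝ} (hl : Tendsto id l (𝓝 T)) (hf : Tendsto f l (𝓝 a))
    (hF : ContinuousAt (Function.uncurry F) (T, a)) (hrel : ∀ᶠ x in l, f x = F x (f x)) :
    a = F T a :=
  tendsto_nhds_unique hf <| (hF.tendsto.comp (hl.prodMk_nhds hf)).congr' <|
    hrel.mono fun _ hx => hx.symm

theorem eq_one_div_add_mul_of_zero_eq {K D c L T : ℝ} (hK : K ≠ 0) (hD : D ≠ 0)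
    (h : 0 = 1 - 2 * K * D * T + (c * K / 2) * L) :
    T = 1 / (2 * K * D) + (c / (4 * D)) * L := by
  field_simp
  linear_combination 4 * h

theorem rg2_constant_curvature_collapse_time
    (d : ℕ) (hd : 2 ≤ d) (α K : ℝ) (hα : α ≠ 0) (hK : K ≠ 0) (hαK : 2 + α * K ≠ 0)
    (lam₀ T : ℝ) (hlt : lam₀ < T) (f : ℝ → ℝ)
    (hrel : ∀ x ∈ Set.Ioo lam₀ T,
      f x = 1 - 2 * K * ((d : ℝ) - 1) * x
        + (α * K / 2) * Real.log (|(2 * f x + α * K) / (2 + α * K)|))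
    (hcollapse : Filter.Tendsto f (nhdsWithin T (Set.Ioo lam₀ T)) (nhds 0)) :
    T = 1 / (2 * K * ((d : ℝ) - 1))
      + (α / (4 * ((d : ℝ) - 1))) * Real.log (|α * K / (2 + α * K)|) := by
  have hD : (d : ℝ) - 1 ≠ 0 := by
    have : (2 : ℝ) ≤ d := by exact_mod_cast hd
    linarith
  have : (𝓝[Set.Ioo lam₀ T] T).NeBot := right_nhdsWithin_Ioo_neBot hlt
  have hlog : (2 * (0 : ℝ) + α * K) / (2 + α * K) ≠ 0 := by
    simpa using div_ne_zero (mul_ne_zero hα hK) hαK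
  have hF : ContinuousAt (Function.uncurry fun x y : ℝ => 1 - 2 * K * ((d : ℝ) - 1) * x
      + (α * K / 2) * Real.log (|(2 * y + α * K) / (2 + α * K)|)) (T, 0) := by
    refine ContinuousAt.add (by fun_prop) (continuousAt_const.mul ?_)
    exact (ContinuousAt.abs (by fun_prop)).log (abs_ne_zero.mpr hlog)
  refine eq_one_div_add_mul_of_zero_eq hK hD ?_
  simpa using eq_of_tendsto_of_eventually_eq_apply (tendsto_id.mono_left nhdsWithin_le_nhds)
    hcollapse hF (eventually_nhdsWithin_of_forall hrel)
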